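/- Under the hypotheses of the previous coercivity estimate, if in addition Re λ < −2K² where K = ‖∇q‖_∞ (and K ≥ 1, choosing ε = 1/(4K²) ≤ 1/(2|Re λ|)), then Re⟨T(λ)u, u⟩ > 0 for every nonzero u ∈ C_c^∞(Ω). Consequently T(λ)u = 0 with u ∈ H²₀(Ω), u ≠ 0, is impossible; i.e., there are no transmission eigenvalues λ with |Re λ| ≥ C|Im λ| and Re λ < −2K². -/

import Mathlib

open MeasureTheory Complex

/-- Partial derivative in the `i`-th coordinate direction. -/
noncomputable def pderiv' {n : ℕ} (u : (Fin n → ℝ) → ℂ) (i : Fin n) : (Fin n → ℝ) → ℂ :=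
  fun x => fderiv ℝ u x (Pi.single i 1)

/-- The Laplacian `Δu = Σᵢ ∂ᵢ²u`. -/
noncomputable def lap {n : ℕ} (u : (Fin n → ℝ) → ℂ) : (Fin n → ℝ) → ℂ :=
  fun x => ∑ i, pderiv' (pderiv' u i) i x

/-- `P₀ = −Δ`. -/
noncomputable def P0 {n : ℕ} (u : (Fin n → ℝ) → ℂ) : (Fin n → ℝ) → ℂ :=
  fun x => -lap u x

/-- `T(λ)u = P₀ q P₀ u − λ(q P₀ u + P₀ (q u) + P₀ u) + λ²(1+q)u`, the interior
transmission operator with `q = 1/m`. -/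
noncomputable def Tlam {n : ℕ} (q : (Fin n → ℝ) → ℝ) (lam : ℂ) (u : (Fin n → ℝ) → ℂ) :
    (Fin n → ℝ) → ℂ :=
  fun x =>
    P0 (fun y => (q y : ℂ) * P0 u y) x
      - lam * ((q x : ℂ) * P0 u x + P0 (fun y => (q y : ℂ) * u y) x + P0 u x)
      + lam ^ 2 * (((1 : ℝ) + q x : ℝ) * u x)

namespace NoEigAux

variable {n : ℕ}

lemma contDiff_pderiv' {u : (Fin n → ℝ) → ℂ} (hu : ContDiff ℝ (⊤ : ℕ∞) u) (i : Fin n) :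
    ContDiff ℝ (⊤ : ℕ∞) (pderiv' u i) :=
  (hu.fderiv_right (by simp)).clm_apply contDiff_const

lemma pderiv'_eq_zero {u : (Fin n → ℝ) → ℂ} {x : Fin n → ℝ} (hx : x ∉ tsupport u) (i : Fin n) :
    pderiv' u i x = 0 := by
  have h : fderiv ℝ u x = 0 := by
    by_contra h
    exact hx (support_fderiv_subset ℝ (Function.mem_support.2 h))
  simp [pderiv', h]

lemma tsupport_pderiv'_subset (u : (Fin n → ℝ) → ℂ) (i : Fin n) :
    tsupport (pderiv' u i) ⊆ tsupport u := by
  apply closure_minimal _ (isClosed_tsupport u)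
  intro x hx
  by_contra h
  exact Function.mem_support.1 hx (pderiv'_eq_zero h i)

lemma hcs_of_subset {f g : (Fin n → ℝ) → ℂ} (hg : HasCompactSupport g)
    (h : tsupport f ⊆ tsupport g) : HasCompactSupport f :=
  IsCompact.of_isClosed_subset hg (isClosed_tsupport f) h

lemma hcs_pderiv' {u : (Fin n → ℝ) → ℂ} (hu : HasCompactSupport u) (i : Fin n) :
    HasCompactSupport (pderiv' u i) :=
  hcs_of_subset hu (tsupport_pderiv'_subset u i)

lemma contDiff_P0 {u : (Fin n → ℝ) → ℂ} (hu : ContDiff ℝ (⊤ : ℕ∞) u) : ContDiff ℝ (⊤ : ℕ∞) (P0 u) := by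
  unfold P0 lap
  exact (ContDiff.sum fun i _ => contDiff_pderiv' (contDiff_pderiv' hu i) i).neg

lemma P0_eq_zero {u : (Fin n → ℝ) → ℂ} {x : Fin n → ℝ} (hx : x ∉ tsupport u) : P0 u x = 0 := by
  have h : ∀ i : Fin n, pderiv' (pderiv' u i) i x = 0 := fun i =>
    pderiv'_eq_zero (fun h => hx (tsupport_pderiv'_subset u i h)) i
  simp [P0, lap, h]

lemma tsupport_P0_subset (u : (Fin n → ℝ) → ℂ) : tsupport (P0 u) ⊆ tsupport u := by
  apply closure_minimal _ (isClosed_tsupport u)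
  intro x hx
  by_contra h
  exact Function.mem_support.1 hx (P0_eq_zero h)

lemma hcs_P0 {u : (Fin n → ℝ) → ℂ} (hu : HasCompactSupport u) : HasCompactSupport (P0 u) :=
  hcs_of_subset hu (tsupport_P0_subset u)

lemma pderiv'_mul {f g : (Fin n → ℝ) → ℂ} (hf : ContDiff ℝ (⊤ : ℕ∞) f) (hg : ContDiff ℝ (⊤ : ℕ∞) g)
    (i : Fin n) (x : Fin n → ℝ) :
    pderiv' (fun y => f y * g y) i x = pderiv' f i x * g x + f x * pderiv' g i x := by
  simp only [pderiv']
  rw [fderiv_fun_mul ((hf.differentiable (by simp)) x) ((hg.differentiable (by simp)) x)]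
  simp [smul_eq_mul]
  ring

lemma pderiv'_conj {u : (Fin n → ℝ) → ℂ} (hu : ContDiff ℝ (⊤ : ℕ∞) u) (i : Fin n) (x : Fin n → ℝ) :
    pderiv' (fun y => (starRingEnd ℂ) (u y)) i x = (starRingEnd ℂ) (pderiv' u i x) := by
  have h : HasFDerivAt (fun y => (starRingEnd ℂ) (u y))
      ((Complex.conjCLE.toContinuousLinearMap).comp (fderiv ℝ u x)) x :=
    (Complex.conjCLE.toContinuousLinearMap.hasFDerivAt).comp x
      ((hu.differentiable (by simp)) x).hasFDerivAt
  simp only [pderiv', h.fderiv]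
  rfl

lemma pderiv'_ofReal {q : (Fin n → ℝ) → ℝ} (hq : ContDiff ℝ (⊤ : ℕ∞) q) (i : Fin n) (x : Fin n → ℝ) :
    pderiv' (fun y => ((q y : ℝ) : ℂ)) i x = ((fderiv ℝ q x (Pi.single i 1) : ℝ) : ℂ) := by
  have h : HasFDerivAt (fun y => ((q y : ℝ) : ℂ))
      (Complex.ofRealCLM.comp (fderiv ℝ q x)) x :=
    (Complex.ofRealCLM.hasFDerivAt).comp x ((hq.differentiable (by simp)) x).hasFDerivAt
  simp only [pderiv', h.fderiv]
  rfl

lemma P0_conj {u : (Fin n → ℝ) → ℂ} (hu : ContDiff ℝ (⊤ : ℕ∞) u) (x : Fin n → ℝ) :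
    P0 (fun y => (starRingEnd ℂ) (u y)) x = (starRingEnd ℂ) (P0 u x) := by
  have h : ∀ i : Fin n, pderiv' (pderiv' (fun y => (starRingEnd ℂ) (u y)) i) i x
      = (starRingEnd ℂ) (pderiv' (pderiv' u i) i x) := by
    intro i
    have h1 : pderiv' (fun y => (starRingEnd ℂ) (u y)) i
        = fun y => (starRingEnd ℂ) (pderiv' u i y) := funext (pderiv'_conj hu i)
    rw [h1]
    exact pderiv'_conj (contDiff_pderiv' hu i) i x
  simp [P0, lap, h, map_sum]

lemma integrable_cs {f : (Fin n → ℝ) → ℂ} (hc : Continuous f) (hs : HasCompactSupport f) :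
    Integrable f :=
  hc.integrable_of_hasCompactSupport hs

lemma integrable_cs' {f : (Fin n → ℝ) → ℝ} (hc : Continuous f) (hs : HasCompactSupport f) :
    Integrable f :=
  hc.integrable_of_hasCompactSupport hs

/-- Integration by parts, both compactly supported. -/
lemma ibp {f g : (Fin n → ℝ) → ℂ} (hf : ContDiff ℝ (⊤ : ℕ∞) f) (hg : ContDiff ℝ (⊤ : ℕ∞) g)
    (hgs : HasCompactSupport g) (i : Fin n) :
    ∫ x, f x * pderiv' g i x = - ∫ x, pderiv' f i x * g x := by
  have h1 : Integrable (fun x => fderiv ℝ f x (Pi.single i 1) * g x) :=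
    integrable_cs (((contDiff_pderiv' hf i).continuous).mul hg.continuous) hgs.mul_left
  have h2 : Integrable (fun x => f x * fderiv ℝ g x (Pi.single i 1)) :=
    integrable_cs (hf.continuous.mul ((contDiff_pderiv' hg i).continuous))
      (hcs_pderiv' hgs i).mul_left
  have h3 : Integrable (fun x => f x * g x) :=
    integrable_cs (hf.continuous.mul hg.continuous) hgs.mul_left
  exact integral_mul_fderiv_eq_neg_fderiv_mul_of_integrable h1 h2 h3
    (fun x _ => (hf.differentiable (by simp)) x) (fun x _ => (hg.differentiable (by simp)) x)

/-- `∫ P₀ f · g = Σᵢ ∫ ∂ᵢf ∂ᵢg` for smooth compactly supported `f, g`. -/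
lemma P0_mul_integral {f g : (Fin n → ℝ) → ℂ} (hf : ContDiff ℝ (⊤ : ℕ∞) f) (hg : ContDiff ℝ (⊤ : ℕ∞) g)
    (hfs : HasCompactSupport f) (hgs : HasCompactSupport g) :
    ∫ x, P0 f x * g x = ∑ i, ∫ x, pderiv' f i x * pderiv' g i x := by
  have key : ∀ i : Fin n, ∫ x, -(pderiv' (pderiv' f i) i x * g x)
      = ∫ x, pderiv' f i x * pderiv' g i x := by
    intro i
    have h := ibp (f := g) (g := pderiv' f i) hg (contDiff_pderiv' hf i) (hcs_pderiv' hfs i) i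
    rw [integral_neg]
    have hc : ∫ x, pderiv' (pderiv' f i) i x * g x = ∫ x, g x * pderiv' (pderiv' f i) i x := by
      congr 1; ext x; ring
    rw [hc, h, neg_neg]
    congr 1; ext x; ring
  calc ∫ x, P0 f x * g x = ∫ x, ∑ i, -(pderiv' (pderiv' f i) i x * g x) := by
        congr 1; ext x
        simp only [P0, lap, neg_mul, Finset.sum_mul, ← Finset.sum_neg_distrib]
  _ = ∑ i, ∫ x, -(pderiv' (pderiv' f i) i x * g x) := by
        refine integral_finset_sum _ (fun i _ => ?_)
        exact (integrable_cs
          (((contDiff_pderiv' (contDiff_pderiv' hf i) i).continuous).mul hg.continuous)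
          hgs.mul_left).neg
  _ = ∑ i, ∫ x, pderiv' f i x * pderiv' g i x := Finset.sum_congr rfl (fun i _ => key i)

lemma P0_symm {f g : (Fin n → ℝ) → ℂ} (hf : ContDiff ℝ (⊤ : ℕ∞) f) (hg : ContDiff ℝ (⊤ : ℕ∞) g)
    (hfs : HasCompactSupport f) (hgs : HasCompactSupport g) :
    ∫ x, P0 f x * g x = ∫ x, f x * P0 g x := by
  rw [P0_mul_integral hf hg hfs hgs]
  have h2 : ∫ x, f x * P0 g x = ∫ x, P0 g x * f x := by congr 1; ext x; ring
  rw [h2, P0_mul_integral hg hf hgs hfs]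
  refine Finset.sum_congr rfl (fun i _ => ?_)
  congr 1; ext x; ring

end NoEigAux

namespace NoEigAux

variable {n : ℕ}

lemma vanish {α : Type*} [Zero α] {u : (Fin n → ℝ) → ℂ} (husupp : HasCompactSupport u)
    {f : (Fin n → ℝ) → α} (h : ∀ x, x ∉ tsupport u → f x = 0) : HasCompactSupport f := by
  apply IsCompact.of_isClosed_subset husupp (isClosed_tsupport f)
  apply closure_minimal _ (isClosed_tsupport u)
  intro x hx
  by_contra hc
  exact Function.mem_support.1 hx (h x hc)

lemma intCast {α : Type*} [MeasurableSpace α] {μ : Measure α} (f : α → ℝ) :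
    ∫ x, ((f x : ℝ) : ℂ) ∂μ = ((∫ x, f x ∂μ : ℝ) : ℂ) := by
  simpa using integral_ofReal (𝕜 := ℂ) (f := f)

lemma amgm {K σ P Q S t : ℝ} (hK : 0 < K) (h1 : σ ^ 2 ≤ P * Q) (h2 : P ≤ K ^ 2)
    (h3 : Q ≤ S * t) (hQ : 0 ≤ Q) (hP : 0 ≤ P) (hS : 0 ≤ S) (ht : 0 ≤ t) :
    -(1/2) * S - K ^ 2 / 2 * t ≤ σ := by
  have hσ : σ ^ 2 ≤ K ^ 2 * (S * t) := by nlinarith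
  by_contra hcon
  push_neg at hcon
  have h0 : 0 ≤ S + K ^ 2 * t := by positivity
  have h4 : S + K ^ 2 * t < -(2 * σ) := by linarith
  have h5 : (S + K ^ 2 * t) * (S + K ^ 2 * t) < (-(2 * σ)) * (-(2 * σ)) :=
    mul_self_lt_mul_self h0 h4
  nlinarith [sq_nonneg (S - K ^ 2 * t), hσ, h5]

lemma re_integral {f : (Fin n → ℝ) → ℂ} (h : Integrable f) :
    (∫ x, f x).re = ∫ x, (f x).re := by
  have := integral_re h
  simp only [RCLike.re_to_complex] at this
  exact this.symm

end NoEigAux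

set_option maxHeartbeats 2000000 in
open NoEigAux in
theorem key_pos {n : ℕ} (Ω : Set (Fin n → ℝ)) (hΩo : IsOpen Ω) (q : (Fin n → ℝ) → ℝ)
    (hq : ContDiff ℝ (⊤ : ℕ∞) q)
    (hqpos : ∀ x ∈ Ω, 0 < q x) (K : ℝ) (hK1 : 1 ≤ K)
    (hK : ∀ x ∈ Ω, Real.sqrt (∑ i, (fderiv ℝ q x (Pi.single i 1)) ^ 2) ≤ K)
    (lam : ℂ) (hre : lam.re < -2 * K ^ 2) (him : lam.im ^ 2 ≤ lam.re ^ 2 / 2)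
    (u : (Fin n → ℝ) → ℂ) (hu : ContDiff ℝ (⊤ : ℕ∞) u) (husupp : HasCompactSupport u)
    (huΩ : tsupport u ⊆ Ω) (hune : ∃ x, u x ≠ 0) :
    0 < (∫ x, Tlam q lam u x * (starRingEnd ℂ) (u x)).re := by
  -- basic smoothness and support facts
  have hv : ContDiff ℝ (⊤ : ℕ∞) (fun x => ((q x : ℝ) : ℂ)) := Complex.ofRealCLM.contDiff.comp hq
  have hcu : ContDiff ℝ (⊤ : ℕ∞) (fun x => (starRingEnd ℂ) (u x)) :=
    Complex.conjCLE.toContinuousLinearMap.contDiff.comp hu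
  have hcus : HasCompactSupport (fun x => (starRingEnd ℂ) (u x)) :=
    vanish husupp (fun x hx => by simp [image_eq_zero_of_notMem_tsupport hx])
  have hPu : ContDiff ℝ (⊤ : ℕ∞) (P0 u) := contDiff_P0 hu
  have hvPu : ContDiff ℝ (⊤ : ℕ∞) (fun y => ((q y : ℝ) : ℂ) * P0 u y) := hv.mul hPu
  have hvPus : HasCompactSupport (fun y => ((q y : ℝ) : ℂ) * P0 u y) :=
    vanish husupp (fun x hx => by simp [P0_eq_zero hx])
  have hvu : ContDiff ℝ (⊤ : ℕ∞) (fun y => ((q y : ℝ) : ℂ) * u y) := hv.mul hu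
  have hvus : HasCompactSupport (fun y => ((q y : ℝ) : ℂ) * u y) :=
    vanish husupp (fun x hx => by simp [image_eq_zero_of_notMem_tsupport hx])
  have hduC : ∀ i : Fin n, Continuous (pderiv' u i) := fun i => (contDiff_pderiv' hu i).continuous
  have hdqC : ∀ i : Fin n, Continuous (fun x => fderiv ℝ q x (Pi.single i 1)) := fun i =>
    ((hq.fderiv_right (m := (⊤ : ℕ∞)) (by simp)).clm_apply contDiff_const).continuous
  have huz : ∀ x, x ∉ tsupport u → u x = 0 := fun x hx => image_eq_zero_of_notMem_tsupport hx
  have hduz : ∀ (i : Fin n) x, x ∉ tsupport u → pderiv' u i x = 0 := fun i x hx =>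
    pderiv'_eq_zero (fun h => hx h) i
  -- the real quantities
  set A := ∫ x, q x * Complex.normSq (P0 u x) with hA_def
  set G := ∫ x, q x * ∑ i, Complex.normSq (pderiv' u i x) with hG_def
  set D := ∫ x, ∑ i, Complex.normSq (pderiv' u i x) with hD_def
  set M := ∫ x, Complex.normSq (u x) with hM_def
  set Mq := ∫ x, q x * Complex.normSq (u x) with hMq_def
  set R := ∫ x, ∑ i, fderiv ℝ q x (Pi.single i 1) *
      (pderiv' u i x * (starRingEnd ℂ) (u x)).re with hR_def
  -- integrability of all real integrands
  have intA : Integrable (fun x => q x * Complex.normSq (P0 u x)) :=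
    integrable_cs' (hq.continuous.mul (Complex.continuous_normSq.comp hPu.continuous))
      (vanish husupp (fun x hx => by simp [P0_eq_zero hx]))
  have intS : Integrable (fun x => ∑ i, Complex.normSq (pderiv' u i x)) :=
    integrable_cs' (continuous_finset_sum _ fun i _ =>
        Complex.continuous_normSq.comp (hduC i))
      (vanish husupp (fun x hx => by simp [hduz _ x hx]))
  have intG : Integrable (fun x => q x * ∑ i, Complex.normSq (pderiv' u i x)) :=
    integrable_cs' (hq.continuous.mul (continuous_finset_sum _ fun i _ =>
        Complex.continuous_normSq.comp (hduC i)))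
      (vanish husupp (fun x hx => by simp [hduz _ x hx]))
  have intM : Integrable (fun x => Complex.normSq (u x)) :=
    integrable_cs' (Complex.continuous_normSq.comp hu.continuous)
      (vanish husupp (fun x hx => by simp [huz x hx]))
  have intMq : Integrable (fun x => q x * Complex.normSq (u x)) :=
    integrable_cs' (hq.continuous.mul (Complex.continuous_normSq.comp hu.continuous))
      (vanish husupp (fun x hx => by simp [huz x hx]))
  have intR : Integrable (fun x => ∑ i, fderiv ℝ q x (Pi.single i 1) *
      (pderiv' u i x * (starRingEnd ℂ) (u x)).re) :=
    integrable_cs' (continuous_finset_sum _ fun i _ => (hdqC i).mul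
        (Complex.continuous_re.comp ((hduC i).mul (Complex.continuous_conj.comp hu.continuous))))
      (vanish husupp (fun x hx => by simp [huz x hx]))
  -- integrability of the complex pieces
  have int1 : Integrable (fun x => P0 (fun y => ((q y : ℝ) : ℂ) * P0 u y) x
      * (starRingEnd ℂ) (u x)) :=
    integrable_cs ((contDiff_P0 hvPu).continuous.mul hcu.continuous)
      (vanish husupp (fun x hx => by simp [huz x hx]))
  have int2 : Integrable (fun x => ((q x : ℝ) : ℂ) * P0 u x * (starRingEnd ℂ) (u x)) :=
    integrable_cs ((hv.continuous.mul hPu.continuous).mul hcu.continuous)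
      (vanish husupp (fun x hx => by simp [huz x hx]))
  have int3 : Integrable (fun x => P0 (fun y => ((q y : ℝ) : ℂ) * u y) x
      * (starRingEnd ℂ) (u x)) :=
    integrable_cs ((contDiff_P0 hvu).continuous.mul hcu.continuous)
      (vanish husupp (fun x hx => by simp [huz x hx]))
  have int4 : Integrable (fun x => P0 u x * (starRingEnd ℂ) (u x)) :=
    integrable_cs (hPu.continuous.mul hcu.continuous)
      (vanish husupp (fun x hx => by simp [huz x hx]))
  have int5 : Integrable (fun x => (((1 : ℝ) + q x : ℝ) : ℂ) * u x * (starRingEnd ℂ) (u x)) :=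
    integrable_cs (((Complex.continuous_ofReal.comp (continuous_const.add hq.continuous)).mul
        hu.continuous).mul hcu.continuous)
      (vanish husupp (fun x hx => by simp [huz x hx]))
  have intW : ∀ i : Fin n, Integrable (fun x => ((fderiv ℝ q x (Pi.single i 1) : ℝ) : ℂ) *
      (pderiv' u i x * (starRingEnd ℂ) (u x))) := fun i =>
    integrable_cs ((Complex.continuous_ofReal.comp (hdqC i)).mul
        ((hduC i).mul (Complex.continuous_conj.comp hu.continuous)))
      (vanish husupp (fun x hx => by simp [huz x hx]))
  have intGi : ∀ i : Fin n, Integrable (fun x =>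
      ((q x * Complex.normSq (pderiv' u i x) : ℝ) : ℂ)) := fun i =>
    integrable_cs (Complex.continuous_ofReal.comp
        (hq.continuous.mul (Complex.continuous_normSq.comp (hduC i))))
      (vanish husupp (fun x hx => by simp [hduz i x hx]))
  have intSi : ∀ i : Fin n, Integrable (fun x => Complex.normSq (pderiv' u i x)) := fun i =>
    integrable_cs' (Complex.continuous_normSq.comp (hduC i))
      (vanish husupp (fun x hx => by simp [hduz i x hx]))
  have intGri : ∀ i : Fin n, Integrable (fun x => q x * Complex.normSq (pderiv' u i x)) :=
    fun i => integrable_cs' (hq.continuous.mul (Complex.continuous_normSq.comp (hduC i)))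
      (vanish husupp (fun x hx => by simp [hduz i x hx]))
  have intRi : ∀ i : Fin n, Integrable (fun x => fderiv ℝ q x (Pi.single i 1) *
      (pderiv' u i x * (starRingEnd ℂ) (u x)).re) := fun i =>
    integrable_cs' ((hdqC i).mul (Complex.continuous_re.comp
        ((hduC i).mul (Complex.continuous_conj.comp hu.continuous))))
      (vanish husupp (fun x hx => by simp [huz x hx]))
  -- Step 1: expansion of the integral by linearity
  have e : (fun x => Tlam q lam u x * (starRingEnd ℂ) (u x)) = fun x =>
      (P0 (fun y => ((q y : ℝ) : ℂ) * P0 u y) x * (starRingEnd ℂ) (u x)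
        - lam * (((q x : ℝ) : ℂ) * P0 u x * (starRingEnd ℂ) (u x)
            + P0 (fun y => ((q y : ℝ) : ℂ) * u y) x * (starRingEnd ℂ) (u x)
            + P0 u x * (starRingEnd ℂ) (u x)))
        + lam ^ 2 * ((((1 : ℝ) + q x : ℝ) : ℂ) * u x * (starRingEnd ℂ) (u x)) := by
    funext x; simp only [Tlam]; ring
  have hsplit : ∫ x, Tlam q lam u x * (starRingEnd ℂ) (u x)
      = (∫ x, P0 (fun y => ((q y : ℝ) : ℂ) * P0 u y) x * (starRingEnd ℂ) (u x))
        - lam * ((∫ x, ((q x : ℝ) : ℂ) * P0 u x * (starRingEnd ℂ) (u x))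
            + (∫ x, P0 (fun y => ((q y : ℝ) : ℂ) * u y) x * (starRingEnd ℂ) (u x))
            + (∫ x, P0 u x * (starRingEnd ℂ) (u x)))
        + lam ^ 2 * (∫ x, (((1 : ℝ) + q x : ℝ) : ℂ) * u x * (starRingEnd ℂ) (u x)) := by
    have iB : Integrable (fun x => ((q x : ℝ) : ℂ) * P0 u x * (starRingEnd ℂ) (u x)
        + P0 (fun y => ((q y : ℝ) : ℂ) * u y) x * (starRingEnd ℂ) (u x)
        + P0 u x * (starRingEnd ℂ) (u x)) := (int2.add int3).add int4
    have iB2 : Integrable (fun x => ((q x : ℝ) : ℂ) * P0 u x * (starRingEnd ℂ) (u x)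
        + P0 (fun y => ((q y : ℝ) : ℂ) * u y) x * (starRingEnd ℂ) (u x)) := int2.add int3
    have iLB : Integrable (fun x => lam * (((q x : ℝ) : ℂ) * P0 u x * (starRingEnd ℂ) (u x)
        + P0 (fun y => ((q y : ℝ) : ℂ) * u y) x * (starRingEnd ℂ) (u x)
        + P0 u x * (starRingEnd ℂ) (u x))) := iB.const_mul lam
    have iX : Integrable (fun x => P0 (fun y => ((q y : ℝ) : ℂ) * P0 u y) x * (starRingEnd ℂ) (u x)
        - lam * (((q x : ℝ) : ℂ) * P0 u x * (starRingEnd ℂ) (u x)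
            + P0 (fun y => ((q y : ℝ) : ℂ) * u y) x * (starRingEnd ℂ) (u x)
            + P0 u x * (starRingEnd ℂ) (u x))) := int1.sub iLB
    have iY : Integrable (fun x => lam ^ 2 * ((((1 : ℝ) + q x : ℝ) : ℂ) * u x
        * (starRingEnd ℂ) (u x))) := int5.const_mul (lam ^ 2)
    rw [e, integral_add iX iY, integral_sub int1 iLB,
      integral_const_mul, integral_const_mul, integral_add iB2 int4,
      integral_add int2 int3]
  -- Step 2: the values of the five pieces
  have hZ1 : (∫ x, P0 (fun y => ((q y : ℝ) : ℂ) * P0 u y) x * (starRingEnd ℂ) (u x))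
      = ((A : ℝ) : ℂ) := by
    rw [P0_symm hvPu hcu hvPus hcus]
    have e1 : (fun x => ((q x : ℝ) : ℂ) * P0 u x * P0 (fun y => (starRingEnd ℂ) (u y)) x)
        = fun x => ((q x * Complex.normSq (P0 u x) : ℝ) : ℂ) := by
      funext x
      rw [P0_conj hu x, mul_assoc, Complex.mul_conj]
      push_cast
      ring
    rw [e1, intCast, hA_def]
  have hZ4 : (∫ x, P0 u x * (starRingEnd ℂ) (u x)) = ((D : ℝ) : ℂ) := by
    rw [P0_mul_integral hu hcu husupp hcus]
    have e4 : ∀ i : Fin n, (fun x => pderiv' u i x *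
          pderiv' (fun y => (starRingEnd ℂ) (u y)) i x)
        = fun x => ((Complex.normSq (pderiv' u i x) : ℝ) : ℂ) := by
      intro i; funext x
      rw [pderiv'_conj hu i x, Complex.mul_conj]
    calc ∑ i, ∫ x, pderiv' u i x * pderiv' (fun y => (starRingEnd ℂ) (u y)) i x
        = ∑ i : Fin n, ∫ x, ((Complex.normSq (pderiv' u i x) : ℝ) : ℂ) := by
          refine Finset.sum_congr rfl fun i _ => ?_; rw [e4 i]
      _ = ∑ i : Fin n, ((∫ x, Complex.normSq (pderiv' u i x) : ℝ) : ℂ) :=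
          Finset.sum_congr rfl fun i _ => intCast _
      _ = ((D : ℝ) : ℂ) := by
          rw [hD_def, integral_finset_sum _ (fun i _ => intSi i)]
          push_cast
          rfl
  have hZ5 : (∫ x, (((1 : ℝ) + q x : ℝ) : ℂ) * u x * (starRingEnd ℂ) (u x))
      = (((M + Mq : ℝ)) : ℂ) := by
    have e5 : (fun x => (((1 : ℝ) + q x : ℝ) : ℂ) * u x * (starRingEnd ℂ) (u x))
        = fun x => ((Complex.normSq (u x) + q x * Complex.normSq (u x) : ℝ) : ℂ) := by
      funext x; rw [mul_assoc, Complex.mul_conj]; push_cast; ring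
    rw [e5, intCast]
    norm_cast
    rw [hM_def, hMq_def]
    exact integral_add intM intMq
  have hZ3 : (∫ x, P0 (fun y => ((q y : ℝ) : ℂ) * u y) x * (starRingEnd ℂ) (u x))
      = (starRingEnd ℂ) (∫ x, ((q x : ℝ) : ℂ) * P0 u x * (starRingEnd ℂ) (u x)) := by
    rw [P0_symm hvu hcu hvus hcus, ← integral_conj]
    congr 1
    funext x
    rw [P0_conj hu x]
    simp only [map_mul, Complex.conj_conj, Complex.conj_ofReal]
    ring
  have hZ2 : (∫ x, ((q x : ℝ) : ℂ) * P0 u x * (starRingEnd ℂ) (u x))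
      = (∑ i, ∫ x, ((fderiv ℝ q x (Pi.single i 1) : ℝ) : ℂ) *
          (pderiv' u i x * (starRingEnd ℂ) (u x))) + ((G : ℝ) : ℂ) := by
    have e2 : (fun x => ((q x : ℝ) : ℂ) * P0 u x * (starRingEnd ℂ) (u x))
        = fun x => P0 u x * (((q x : ℝ) : ℂ) * (starRingEnd ℂ) (u x)) := by
      funext x; ring
    rw [e2, P0_mul_integral hu (hv.mul hcu) husupp
        (vanish husupp (fun x hx => by simp [huz x hx]))]
    have e3 : ∀ i : Fin n, (fun x => pderiv' u i x *
          pderiv' (fun y => ((q y : ℝ) : ℂ) * (starRingEnd ℂ) (u y)) i x)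
        = fun x => ((fderiv ℝ q x (Pi.single i 1) : ℝ) : ℂ) *
            (pderiv' u i x * (starRingEnd ℂ) (u x))
          + ((q x * Complex.normSq (pderiv' u i x) : ℝ) : ℂ) := by
      intro i; funext x
      rw [pderiv'_mul hv hcu i x, pderiv'_ofReal hq i x, pderiv'_conj hu i x, mul_add]
      congr 1
      · ring
      · rw [show pderiv' u i x * (((q x : ℝ) : ℂ) * (starRingEnd ℂ) (pderiv' u i x))
            = ((q x : ℝ) : ℂ) * (pderiv' u i x * (starRingEnd ℂ) (pderiv' u i x)) by ring,
          Complex.mul_conj]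
        push_cast; ring
    calc ∑ i, ∫ x, pderiv' u i x *
          pderiv' (fun y => ((q y : ℝ) : ℂ) * (starRingEnd ℂ) (u y)) i x
        = ∑ i : Fin n, ((∫ x, ((fderiv ℝ q x (Pi.single i 1) : ℝ) : ℂ) *
            (pderiv' u i x * (starRingEnd ℂ) (u x)))
            + ∫ x, ((q x * Complex.normSq (pderiv' u i x) : ℝ) : ℂ)) := by
          refine Finset.sum_congr rfl fun i _ => ?_
          rw [e3 i, integral_add (intW i) (intGi i)]
      _ = (∑ i, ∫ x, ((fderiv ℝ q x (Pi.single i 1) : ℝ) : ℂ) *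
            (pderiv' u i x * (starRingEnd ℂ) (u x))) + ((G : ℝ) : ℂ) := by
          rw [Finset.sum_add_distrib]
          congr 1
          calc ∑ i : Fin n, ∫ x, ((q x * Complex.normSq (pderiv' u i x) : ℝ) : ℂ)
              = ∑ i : Fin n, ((∫ x, q x * Complex.normSq (pderiv' u i x) : ℝ) : ℂ) :=
                Finset.sum_congr rfl fun i _ => intCast _
            _ = ((G : ℝ) : ℂ) := by
                rw [hG_def]
                norm_cast
                rw [← integral_finset_sum _ (fun i _ => intGri i)]
                congr 1; funext x; rw [Finset.mul_sum]
  -- Step 3: taking the real part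
  have hWre : (∑ i, ∫ x, ((fderiv ℝ q x (Pi.single i 1) : ℝ) : ℂ) *
      (pderiv' u i x * (starRingEnd ℂ) (u x))).re = R := by
    rw [Complex.re_sum]
    have e6 : ∀ i : Fin n, (∫ x, ((fderiv ℝ q x (Pi.single i 1) : ℝ) : ℂ) *
        (pderiv' u i x * (starRingEnd ℂ) (u x))).re
        = ∫ x, fderiv ℝ q x (Pi.single i 1) * (pderiv' u i x * (starRingEnd ℂ) (u x)).re := by
      intro i
      rw [re_integral (intW i)]
      congr 1; funext x
      simp [Complex.mul_re]
    rw [Finset.sum_congr rfl (fun i _ => e6 i), hR_def,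
      integral_finset_sum _ (fun i _ => intRi i)]
  have hmain : (∫ x, Tlam q lam u x * (starRingEnd ℂ) (u x)).re
      = A - lam.re * (2 * (R + G) + D) + (lam.re ^ 2 - lam.im ^ 2) * (M + Mq) := by
    have z2re : ((∑ i, ∫ x, ((fderiv ℝ q x (Pi.single i 1) : ℝ) : ℂ) *
        (pderiv' u i x * (starRingEnd ℂ) (u x))) + ((G : ℝ) : ℂ)).re = R + G := by
      rw [Complex.add_re, hWre, Complex.ofReal_re]
    rw [hsplit, hZ1, hZ3, hZ4, hZ5, hZ2, Complex.add_conj, z2re]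
    simp only [Complex.add_re, Complex.sub_re, Complex.mul_re, Complex.ofReal_re,
      Complex.ofReal_im, Complex.add_im, Complex.ofReal_im, pow_two, Complex.mul_im]
    ring
  -- Step 4: sign estimates
  have hA : 0 ≤ A := by
    rw [hA_def]
    apply integral_nonneg
    intro x
    by_cases hx : x ∈ Ω
    · exact mul_nonneg (hqpos x hx).le (Complex.normSq_nonneg _)
    · have hxt : x ∉ tsupport u := fun h => hx (huΩ h)
      simp [P0_eq_zero hxt]
  have hG : 0 ≤ G := by
    rw [hG_def]
    apply integral_nonneg
    intro x
    by_cases hx : x ∈ Ω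
    · exact mul_nonneg (hqpos x hx).le
        (Finset.sum_nonneg fun i _ => Complex.normSq_nonneg _)
    · have hxt : x ∉ tsupport u := fun h => hx (huΩ h)
      simp [hduz _ x hxt]
  have hD : 0 ≤ D := by
    rw [hD_def]
    exact integral_nonneg fun x => Finset.sum_nonneg fun i _ => Complex.normSq_nonneg _
  have hMq : 0 ≤ Mq := by
    rw [hMq_def]
    apply integral_nonneg
    intro x
    by_cases hx : x ∈ Ω
    · exact mul_nonneg (hqpos x hx).le (Complex.normSq_nonneg _)
    · have hxt : x ∉ tsupport u := fun h => hx (huΩ h)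
      simp [huz x hxt]
  have hMpos : 0 < M := by
    rw [hM_def]
    rw [integral_pos_iff_support_of_nonneg (fun x => Complex.normSq_nonneg (u x)) intM]
    have hsup : Function.support (fun x => Complex.normSq (u x)) = {x | u x ≠ 0} := by
      ext x; simp [Function.mem_support, Complex.normSq_eq_zero]
    rw [hsup]
    have hopen : IsOpen {x : Fin n → ℝ | u x ≠ 0} :=
      isOpen_compl_singleton.preimage hu.continuous
    exact hopen.measure_pos volume hune
  have hptwise : ∀ x, -(1/2) * (∑ i, Complex.normSq (pderiv' u i x))
      - K ^ 2 / 2 * Complex.normSq (u x)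
      ≤ ∑ i, fderiv ℝ q x (Pi.single i 1) * (pderiv' u i x * (starRingEnd ℂ) (u x)).re := by
    intro x
    by_cases hx : x ∈ Ω
    · have hcs := Finset.sum_mul_sq_le_sq_mul_sq Finset.univ
        (fun i => fderiv ℝ q x (Pi.single i 1))
        (fun i => (pderiv' u i x * (starRingEnd ℂ) (u x)).re)
      have ha2 : ∑ i, (fderiv ℝ q x (Pi.single i 1)) ^ 2 ≤ K ^ 2 := by
        have h1 := hK x hx
        have h2 : 0 ≤ ∑ i, (fderiv ℝ q x (Pi.single i 1)) ^ 2 :=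
          Finset.sum_nonneg fun i _ => sq_nonneg _
        nlinarith [Real.sq_sqrt h2,
          Real.sqrt_nonneg (∑ i, (fderiv ℝ q x (Pi.single i 1)) ^ 2)]
      have hc2 : ∑ i, ((pderiv' u i x * (starRingEnd ℂ) (u x)).re) ^ 2
          ≤ (∑ i, Complex.normSq (pderiv' u i x)) * Complex.normSq (u x) := by
        rw [Finset.sum_mul]
        refine Finset.sum_le_sum fun i _ => ?_
        have he : Complex.normSq (pderiv' u i x * (starRingEnd ℂ) (u x))
            = Complex.normSq (pderiv' u i x) * Complex.normSq (u x) := by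
          rw [map_mul, Complex.normSq_conj]
        nlinarith [sq_nonneg ((pderiv' u i x * (starRingEnd ℂ) (u x)).im),
          Complex.normSq_apply (pderiv' u i x * (starRingEnd ℂ) (u x)), he]
      have hQ : 0 ≤ ∑ i, ((pderiv' u i x * (starRingEnd ℂ) (u x)).re) ^ 2 :=
        Finset.sum_nonneg fun i _ => sq_nonneg _
      have hP : 0 ≤ ∑ i, (fderiv ℝ q x (Pi.single i 1)) ^ 2 :=
        Finset.sum_nonneg fun i _ => sq_nonneg _
      have hS : 0 ≤ ∑ i, Complex.normSq (pderiv' u i x) :=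
        Finset.sum_nonneg fun i _ => Complex.normSq_nonneg _
      have ht : 0 ≤ Complex.normSq (u x) := Complex.normSq_nonneg _
      have hKp : (0:ℝ) < K := lt_of_lt_of_le one_pos hK1
      exact amgm hKp hcs ha2 hc2 hQ hP hS ht
    · have hxt : x ∉ tsupport u := fun h => hx (huΩ h)
      simp [huz x hxt, hduz _ x hxt]
  have hRlow : -(1/2) * D - K ^ 2 / 2 * M ≤ R := by
    have heq : -(1/2) * D - K ^ 2 / 2 * M
        = ∫ x, (-(1/2) * (∑ i, Complex.normSq (pderiv' u i x))
            - K ^ 2 / 2 * Complex.normSq (u x)) := by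
      rw [hD_def, hM_def, integral_sub (intS.const_mul _) (intM.const_mul _),
        integral_const_mul, integral_const_mul]
    rw [heq, hR_def]
    exact integral_mono ((intS.const_mul _).sub (intM.const_mul _)) intR fun x => hptwise x
  -- Step 5: conclusion
  rw [hmain]
  have hKpos : (0:ℝ) < K := lt_of_lt_of_le one_pos hK1
  have hKsq : (0:ℝ) < K ^ 2 := by positivity
  have haneg : lam.re < 0 := by linarith
  have key4 : 0 < lam.re ^ 2 / 2 + lam.re * K ^ 2 := by
    nlinarith [mul_pos (show (0:ℝ) < -lam.re by linarith)
      (show (0:ℝ) < -lam.re - 2 * K ^ 2 by linarith)]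
  have t1 : 0 ≤ (-lam.re) * G := mul_nonneg (by linarith) hG
  have t2 : 0 ≤ (-lam.re) * (2 * R + D + K ^ 2 * M) :=
    mul_nonneg (by linarith) (by nlinarith [hRlow])
  have t3 : 0 ≤ (lam.re ^ 2 - lam.im ^ 2 - lam.re ^ 2 / 2) * (M + Mq) :=
    mul_nonneg (by linarith) (by linarith)
  have t4 : 0 < M * (lam.re ^ 2 / 2 + lam.re * K ^ 2) := mul_pos hMpos key4
  have t5 : 0 ≤ lam.re ^ 2 / 2 * Mq := mul_nonneg (by positivity) hMq
  nlinarith [t1, t2, t3, t4, t5, hA]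

/-- In the region `Re λ < −2K²`, `(Im λ)² ≤ (Re λ)²/2`, one has
`Re⟨T(λ)u, u⟩ > 0` for every nonzero `u` smooth and compactly supported in `Ω`;
consequently `T(λ)u = 0` is impossible for such nonzero `u`, i.e. there are no
transmission eigenvalues with `|Re λ| ≥ C|Im λ|` and `Re λ < −2K²`. -/
theorem no_eigenvalues_far_left {n : ℕ} (Ω : Set (Fin n → ℝ)) (hΩo : IsOpen Ω)
    (hΩb : Bornology.IsBounded Ω) (q : (Fin n → ℝ) → ℝ) (hq : ContDiff ℝ (⊤ : ℕ∞) q)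
    (hqpos : ∀ x ∈ Ω, 0 < q x) (K : ℝ) (hK1 : 1 ≤ K)
    (hK : ∀ x ∈ Ω, Real.sqrt (∑ i, (fderiv ℝ q x (Pi.single i 1)) ^ 2) ≤ K)
    (lam : ℂ) (hre : lam.re < -2 * K ^ 2) (him : lam.im ^ 2 ≤ lam.re ^ 2 / 2)
    (u : (Fin n → ℝ) → ℂ) (hu : ContDiff ℝ (⊤ : ℕ∞) u) (husupp : HasCompactSupport u)
    (huΩ : tsupport u ⊆ Ω) (hune : ∃ x, u x ≠ 0) :
    0 < (∫ x in Ω, Tlam q lam u x * (starRingEnd ℂ) (u x)).re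
    ∧ ∃ x, Tlam q lam u x ≠ 0 := by
  have hset : ∫ x in Ω, Tlam q lam u x * (starRingEnd ℂ) (u x)
      = ∫ x, Tlam q lam u x * (starRingEnd ℂ) (u x) :=
    setIntegral_eq_integral_of_forall_compl_eq_zero (fun x hx => by
      have hxt : x ∉ tsupport u := fun h => hx (huΩ h)
      simp [image_eq_zero_of_notMem_tsupport hxt])
  have hpos := key_pos Ω hΩo q hq hqpos K hK1 hK lam hre him u hu husupp huΩ hune
  refine ⟨by rw [hset]; exact hpos, ?_⟩
  by_contra h
  push_neg at h
  have hz : (fun x => Tlam q lam u x * (starRingEnd ℂ) (u x)) = fun _ => (0 : ℂ) := by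
    funext x; rw [h x]; ring
  rw [hz] at hpos
  simp at hpos
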